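/- arXiv:2110.02265 — 2 statements merged into one kernel-verified Lean document; each statement's English description precedes it below -/
import Mathlib

section
/- Let 0 < s < 1, 0 < σ < 1, ρ = s + σ - 1 > 0, γ = h(s) - h(σ), and J(x) = h(ρx + 1 - σ) - h(σ) - γx with h the base-2 binary entropy. Then the unique maximizer of J over the interval where 0 < ρx + 1 - σ < 1 is f* = σ/ρ - exp₂(γ/ρ) / (ρ·(exp₂(γ/ρ) + 1)), i.e., the derivative J'(f*) = 0, where exp₂(t) = 2^t. -/
/-- Binary entropy function (base 2). -/
noncomputable def binEnt (x : ℝ) : ℝ :=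
  -(x * Real.logb 2 x) - (1 - x) * Real.logb 2 (1 - x)

lemma binEnt_hasDerivAt {y : ℝ} (h0 : 0 < y) (h1 : y < 1) :
    HasDerivAt binEnt (Real.logb 2 (1 - y) - Real.logb 2 y) y := by
  have h1' : 0 < 1 - y := by linarith
  have hxlog : HasDerivAt (fun x : ℝ => x * Real.log x) (Real.log y + 1) y := by
    have := (hasDerivAt_id y).mul (Real.hasDerivAt_log h0.ne')
    exact this.congr_deriv (by simp [h0.ne'])
  have hu : HasDerivAt (fun x : ℝ => 1 - x) (-1 : ℝ) y := by
    exact (hasDerivAt_id' y).const_sub (1:ℝ)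
  have h2log : HasDerivAt (fun x : ℝ => (1 - x) * Real.log (1 - x))
      (-(Real.log (1 - y) + 1)) y := by
    have hl : HasDerivAt (fun x : ℝ => Real.log (1 - x)) ((1 - y)⁻¹ * (-1)) y :=
      (Real.hasDerivAt_log h1'.ne').comp y hu
    have := hu.mul hl
    exact this.congr_deriv (by rw [mul_inv_cancel_left₀ h1'.ne']; ring)
  have key : HasDerivAt (fun x : ℝ => (-(x * Real.log x) - (1 - x) * Real.log (1 - x)) / Real.log 2)
      ((Real.log (1 - y) - Real.log y) / Real.log 2) y := by
    have := ((hxlog.neg).sub h2log).div_const (Real.log 2)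
    exact this.congr_deriv (by ring)
  have heq : binEnt = fun x : ℝ => (-(x * Real.log x) - (1 - x) * Real.log (1 - x)) / Real.log 2 := by
    funext x
    simp only [binEnt, Real.logb]
    ring
  rw [heq]
  convert key using 1
  simp [Real.logb]
  ring

/-- The closed-form optimizer `f* = σ/ρ - 2^(γ/ρ)/(ρ(2^(γ/ρ)+1))` is the unique
maximizer of `J(x) = h(ρx+1-σ) - h(σ) - γx` over the admissible set, and the
derivative of `J` vanishes there. -/
theorem J_unique_maximizer (s σ : ℝ) (hs : 0 < s) (hs1 : s < 1) (hσ : 0 < σ) (hσ1 : σ < 1)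
    (hρ : 0 < s + σ - 1) :
    let ρ := s + σ - 1
    let γ := binEnt s - binEnt σ
    let J : ℝ → ℝ := fun x => binEnt (ρ * x + 1 - σ) - binEnt σ - γ * x
    let S : Set ℝ := {x : ℝ | 0 < ρ * x + 1 - σ ∧ ρ * x + 1 - σ < 1}
    let fstar : ℝ := σ / ρ - (2 : ℝ) ^ (γ / ρ) / (ρ * ((2 : ℝ) ^ (γ / ρ) + 1))
    deriv J fstar = 0 ∧ fstar ∈ S ∧
      ∀ x ∈ S, J x ≤ J fstar ∧ (J x = J fstar → x = fstar) := by
  intro ρ γ J S fstar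
  have hρ0 : (0:ℝ) < ρ := hρ
  have hρne : ρ ≠ 0 := ne_of_gt hρ0
  set E : ℝ := (2 : ℝ) ^ (γ / ρ) with hEdef
  have hE : 0 < E := Real.rpow_pos_of_pos two_pos _
  have hE1 : 0 < E + 1 := by linarith
  -- the interior point value
  have hy : ρ * fstar + 1 - σ = 1 / (E + 1) := by
    show ρ * (σ / ρ - E / (ρ * (E + 1))) + 1 - σ = 1 / (E + 1)
    field_simp
    ring
  have hy0 : 0 < ρ * fstar + 1 - σ := by rw [hy]; positivity
  have hy1 : ρ * fstar + 1 - σ < 1 := by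
    rw [hy, div_lt_one hE1]; linarith
  have hfS : fstar ∈ S := ⟨hy0, hy1⟩
  -- derivative formula
  set J' : ℝ → ℝ := fun x =>
    (Real.logb 2 (1 - (ρ * x + 1 - σ)) - Real.logb 2 (ρ * x + 1 - σ)) * ρ - γ with hJ'def
  have hderiv : ∀ x ∈ S, HasDerivAt J (J' x) x := by
    intro x hx
    obtain ⟨hx0, hx1⟩ := hx
    have hin : HasDerivAt (fun x : ℝ => ρ * x + 1 - σ) ρ x := by
      simpa using (((hasDerivAt_id x).const_mul ρ).add_const (1:ℝ)).sub_const σ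
    have hb : HasDerivAt (fun x : ℝ => binEnt (ρ * x + 1 - σ))
        ((Real.logb 2 (1 - (ρ * x + 1 - σ)) - Real.logb 2 (ρ * x + 1 - σ)) * ρ) x :=
      (binEnt_hasDerivAt (y := ρ * x + 1 - σ) hx0 hx1).comp (h₂ := binEnt) x hin
    have := (hb.sub_const (binEnt σ)).sub ((hasDerivAt_id x).const_mul γ)
    exact this.congr_deriv (by simp only [hJ'def]; ring)
  -- J' fstar = 0
  have hJ'fstar : J' fstar = 0 := by
    have h1y : 1 - 1 / (E + 1) = E / (E + 1) := by
      field_simp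
      ring
    have hlogE : Real.logb 2 E = γ / ρ := by
      rw [hEdef]; exact Real.logb_rpow two_pos (by norm_num)
    have : Real.logb 2 (E / (E + 1)) - Real.logb 2 (1 / (E + 1)) = γ / ρ := by
      rw [Real.logb_div hE.ne' hE1.ne', Real.logb_div one_ne_zero hE1.ne', hlogE]
      simp
    simp only [hJ'def, hy]
    rw [h1y, this]
    field_simp
    ring
  -- strict antitonicity of J' on S
  have hanti : ∀ x₁ ∈ S, ∀ x₂ ∈ S, x₁ < x₂ → J' x₂ < J' x₁ := by
    intro x₁ hx₁ x₂ hx₂ hlt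
    obtain ⟨h10, h11⟩ := hx₁
    obtain ⟨h20, h21⟩ := hx₂
    have hylt : ρ * x₁ + 1 - σ < ρ * x₂ + 1 - σ := by nlinarith
    have hA : Real.logb 2 (1 - (ρ * x₂ + 1 - σ)) < Real.logb 2 (1 - (ρ * x₁ + 1 - σ)) :=
      Real.logb_lt_logb one_lt_two (by linarith) (by linarith)
    have hB : Real.logb 2 (ρ * x₁ + 1 - σ) < Real.logb 2 (ρ * x₂ + 1 - σ) :=
      Real.logb_lt_logb one_lt_two h10 hylt
    simp only [hJ'def]
    nlinarith
  -- main conclusion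
  have hmax : ∀ x ∈ S, x ≠ fstar → J x < J fstar := by
    intro x hx hne
    have hsegsub : ∀ a b : ℝ, a ∈ S → b ∈ S → ∀ z ∈ Set.Icc a b, z ∈ S := by
      intro a b ha hb z hz
      obtain ⟨ha0, ha1⟩ := ha
      obtain ⟨hb0, hb1⟩ := hb
      obtain ⟨hz1, hz2⟩ := hz
      constructor <;> nlinarith
    rcases lt_or_gt_of_ne hne with h | h
    · -- x < fstar
      have hsub := hsegsub x fstar hx hfS
      have hcont : ContinuousOn J (Set.Icc x fstar) := fun z hz =>
        ((hderiv z (hsub z hz)).continuousAt).continuousWithinAt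
      obtain ⟨c, hc, hcslope⟩ := exists_hasDerivAt_eq_slope J J' h hcont
        (fun z hz => hderiv z (hsub z ⟨le_of_lt hz.1, le_of_lt hz.2⟩))
      have hcS : c ∈ S := hsub c ⟨le_of_lt hc.1, le_of_lt hc.2⟩
      have : 0 < J' c := by
        have := hanti c hcS fstar hfS hc.2
        rw [hJ'fstar] at this; linarith
      rw [hcslope] at this
      have hd : 0 < fstar - x := by linarith
      have h2 := mul_pos this hd
      rw [div_mul_cancel₀ _ (ne_of_gt hd)] at h2
      linarith
    · -- fstar < x
      have hsub := hsegsub fstar x hfS hx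
      have hcont : ContinuousOn J (Set.Icc fstar x) := fun z hz =>
        ((hderiv z (hsub z hz)).continuousAt).continuousWithinAt
      obtain ⟨c, hc, hcslope⟩ := exists_hasDerivAt_eq_slope J J' h hcont
        (fun z hz => hderiv z (hsub z ⟨le_of_lt hz.1, le_of_lt hz.2⟩))
      have hcS : c ∈ S := hsub c ⟨le_of_lt hc.1, le_of_lt hc.2⟩
      have : J' c < 0 := by
        have := hanti fstar hfS c hcS hc.1
        rw [hJ'fstar] at this; linarith
      rw [hcslope] at this
      have hd : 0 < x - fstar := by linarith
      have h2 := mul_neg_of_neg_of_pos this hd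
      rw [div_mul_cancel₀ _ (ne_of_gt hd)] at h2
      linarith
  refine ⟨?_, hfS, ?_⟩
  · rw [(hderiv fstar hfS).deriv, hJ'fstar]
  · intro x hx
    by_cases hne : x = fstar
    · subst hne; exact ⟨le_rfl, fun _ => rfl⟩
    · exact ⟨le_of_lt (hmax x hx hne), fun h => absurd h (ne_of_lt (hmax x hx hne))⟩
end

section
/- With J as above and f* its maximizer, J(f*) ≥ J(x) for all admissible x, and in particular the maximal achievable information gain per test is J(f*) = h(ρ f* + 1 - σ) - h(σ) - γ f*. -/
lemma gibbs (u p : ℝ) (hu : 0 < u) (hu1 : u < 1) (hp : 0 < p) (hp1 : p < 1) :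
    binEnt u ≤ -(u * Real.logb 2 p) - (1 - u) * Real.logb 2 (1 - p) := by
  have hlog2 : (0:ℝ) < Real.log 2 := Real.log_pos (by norm_num)
  have hu' : (0:ℝ) < 1 - u := by linarith
  have hp' : (0:ℝ) < 1 - p := by linarith
  have h1 : Real.log (p / u) ≤ p / u - 1 := Real.log_le_sub_one_of_pos (by positivity)
  have h2 : Real.log ((1 - p) / (1 - u)) ≤ (1 - p) / (1 - u) - 1 :=
    Real.log_le_sub_one_of_pos (by positivity)
  rw [Real.log_div (ne_of_gt hp) (ne_of_gt hu)] at h1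
  rw [Real.log_div (ne_of_gt hp') (ne_of_gt hu')] at h2
  have e1 : u * (Real.log p - Real.log u) ≤ p - u := by
    have := mul_le_mul_of_nonneg_left h1 (le_of_lt hu)
    calc u * (Real.log p - Real.log u) ≤ u * (p / u - 1) := this
      _ = p - u := by field_simp
  have e2 : (1 - u) * (Real.log (1 - p) - Real.log (1 - u)) ≤ (1 - p) - (1 - u) := by
    have := mul_le_mul_of_nonneg_left h2 (le_of_lt hu')
    calc (1 - u) * (Real.log (1 - p) - Real.log (1 - u)) ≤ (1 - u) * ((1 - p) / (1 - u) - 1) := this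
      _ = (1 - p) - (1 - u) := by field_simp
  unfold binEnt Real.logb
  have key : -(u * Real.log u) - (1 - u) * Real.log (1 - u) ≤
      -(u * Real.log p) - (1 - u) * Real.log (1 - p) := by nlinarith
  calc -(u * (Real.log u / Real.log 2)) - (1 - u) * (Real.log (1 - u) / Real.log 2)
      = (-(u * Real.log u) - (1 - u) * Real.log (1 - u)) / Real.log 2 := by ring
    _ ≤ (-(u * Real.log p) - (1 - u) * Real.log (1 - p)) / Real.log 2 :=
        (div_le_div_iff_of_pos_right hlog2).mpr key
    _ = -(u * (Real.log p / Real.log 2)) - (1 - u) * (Real.log (1 - p) / Real.log 2) := by ring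


lemma logb_self_rpow (c : ℝ) : Real.logb 2 ((2:ℝ) ^ c) = c := by
  rw [Real.logb, Real.log_rpow (by norm_num)]
  field_simp [Real.logb]

lemma maxval (c : ℝ) :
    binEnt (1 / ((2:ℝ) ^ c + 1)) - c * (1 / ((2:ℝ) ^ c + 1)) =
      Real.logb 2 ((2:ℝ) ^ c + 1) - c := by
  have ht : (0:ℝ) < (2:ℝ) ^ c := Real.rpow_pos_of_pos (by norm_num) c
  set t := (2:ℝ) ^ c with htdef
  have ht1 : (0:ℝ) < t + 1 := by linarith
  have h1 : (1:ℝ) - 1 / (t + 1) = t / (t + 1) := by field_simp; ring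
  have h2 : Real.logb 2 (1 / (t + 1)) = -Real.logb 2 (t + 1) := by
    rw [one_div, Real.logb_inv]
  have h3 : Real.logb 2 (t / (t + 1)) = c - Real.logb 2 (t + 1) := by
    rw [Real.logb_div (ne_of_gt ht) (ne_of_gt ht1), htdef, logb_self_rpow]
  unfold binEnt
  rw [h1, h2, h3]
  field_simp
  ring

lemma upper (c u : ℝ) (hu : 0 < u) (hu1 : u < 1) :
    binEnt u - c * u ≤ Real.logb 2 ((2:ℝ) ^ c + 1) - c := by
  have ht : (0:ℝ) < (2:ℝ) ^ c := Real.rpow_pos_of_pos (by norm_num) c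
  set t := (2:ℝ) ^ c with htdef
  have ht1 : (0:ℝ) < t + 1 := by linarith
  have hp : (0:ℝ) < 1 / (t + 1) := by positivity
  have hp1 : 1 / (t + 1) < 1 := by
    rw [div_lt_one ht1]; linarith
  have hg := gibbs u (1 / (t + 1)) hu hu1 hp hp1
  have h1 : (1:ℝ) - 1 / (t + 1) = t / (t + 1) := by field_simp; ring
  have h2 : Real.logb 2 (1 / (t + 1)) = -Real.logb 2 (t + 1) := by
    rw [one_div, Real.logb_inv]
  have h3 : Real.logb 2 (t / (t + 1)) = c - Real.logb 2 (t + 1) := by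
    rw [Real.logb_div (ne_of_gt ht) (ne_of_gt ht1), htdef, logb_self_rpow]
  rw [h1, h2, h3] at hg
  nlinarith

/-- `J(f*) ≥ J(x)` for all admissible `x`, and the maximal achievable information
gain per test is `J(f*) = h(ρf* + 1 - σ) - h(σ) - γ f*`. -/
theorem J_max_value (s σ : ℝ) (hs : 0 < s) (hs1 : s < 1) (hσ : 0 < σ) (hσ1 : σ < 1)
    (hρ : 0 < s + σ - 1) :
    let ρ := s + σ - 1
    let γ := binEnt s - binEnt σ
    let J : ℝ → ℝ := fun x => binEnt (ρ * x + 1 - σ) - binEnt σ - γ * x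
    let fstar : ℝ := σ / ρ - (2 : ℝ) ^ (γ / ρ) / (ρ * ((2 : ℝ) ^ (γ / ρ) + 1))
    (∀ x : ℝ, 0 < ρ * x + 1 - σ → ρ * x + 1 - σ < 1 → J x ≤ J fstar) ∧
      J fstar = binEnt (ρ * fstar + 1 - σ) - binEnt σ - γ * fstar := by
  intro ρ γ J fstar
  have hρ' : ρ ≠ 0 := ne_of_gt hρ
  set c : ℝ := γ / ρ with hc
  have ht : (0:ℝ) < (2:ℝ) ^ c := Real.rpow_pos_of_pos (by norm_num) c
  set t : ℝ := (2:ℝ) ^ c with htdef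
  have ht1 : (0:ℝ) < t + 1 := by linarith
  have hstar : ρ * fstar + 1 - σ = 1 / (t + 1) := by
    show ρ * (σ / ρ - t / (ρ * (t + 1))) + 1 - σ = 1 / (t + 1)
    field_simp
    ring
  constructor
  · intro x hx1 hx2
    show binEnt (ρ * x + 1 - σ) - binEnt σ - γ * x ≤
      binEnt (ρ * fstar + 1 - σ) - binEnt σ - γ * fstar
    have hγ : γ = c * ρ := by rw [hc]; field_simp
    have e1 : γ * x = c * (ρ * x + 1 - σ) - c * (1 - σ) := by rw [hγ]; ring
    have e2 : γ * fstar = c * (ρ * fstar + 1 - σ) - c * (1 - σ) := by rw [hγ]; ring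
    have hub := upper c (ρ * x + 1 - σ) hx1 hx2
    have hmv : binEnt (ρ * fstar + 1 - σ) - c * (ρ * fstar + 1 - σ) =
        Real.logb 2 (t + 1) - c := by
      rw [hstar]; exact maxval c
    linarith
  · rfl
end
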